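/- If η ∈ H satisfies (η − η⟨η,η⟩)⟨η,η⟩^{1/2} = 0, then ⟨η,η⟩ is a projection in A. -/

import Mathlib

open scoped RightActions

/-- The December 2024 Mathlib `CStarModule` (right Hilbert C⋆-module, `Aᵐᵒᵖ` acting on `E`). -/
class RightCStarModule (A : Type*) (E : Type*) [NonUnitalSemiring A] [StarRing A]
    [Module ℂ A] [AddCommGroup E] [Module ℂ E] [PartialOrder A] [SMul Aᵐᵒᵖ E] [Norm A] [Norm E]
    extends Inner A E where
  inner_add_right {x} {y} {z} : inner x (y + z) = inner x y + inner x z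
  inner_self_nonneg {x} : 0 ≤ inner x x
  inner_self {x} : inner x x = 0 ↔ x = 0
  inner_op_smul_right {a : A} {x y : E} : inner x (y <• a) = inner x y * a
  inner_smul_right_complex {z : ℂ} {x} {y} : inner x (z • y) = z • inner x y
  star_inner x y : star (inner x y) = inner y x
  norm_eq_sqrt_norm_inner_self x : ‖x‖ = √‖inner x x‖

variable {A E : Type*} [NonUnitalCStarAlgebra A] [PartialOrder A] [StarOrderedRing A]
  [AddCommGroup E] [Module ℂ E] [SMul Aᵐᵒᵖ E] [Norm E] [RightCStarModule A E]

/-!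
Put `a = ⟨η,η⟩` and `s = a^{1/2}`. The vector `ξ = (η - η a) s` has
`⟨ξ,ξ⟩ = s ((a - a²) - a (a - a²)) s = (a - a²)²`, since everything is a polynomial in `s`
and `s² = a`. So `ξ = 0` forces `(a - a²)² = 0`, and `a - a²` is self-adjoint, whence
`a - a² = 0` by the C⋆-identity.
-/

namespace RightCStarModule

omit [StarOrderedRing A]

theorem inner_sub_right (x y z : E) :
    inner (𝕜 := A) x (y - z) = inner (𝕜 := A) x y - inner (𝕜 := A) x z := by
  rw [eq_sub_iff_add_eq, ← inner_add_right, sub_add_cancel]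

theorem inner_sub_left (x y z : E) :
    inner (𝕜 := A) (x - y) z = inner (𝕜 := A) x z - inner (𝕜 := A) y z := by
  rw [← star_inner z, inner_sub_right, star_sub, star_inner, star_inner]

theorem inner_op_smul_left (x y : E) (b : A) :
    inner (𝕜 := A) (x <• b) y = star b * inner (𝕜 := A) x y := by
  rw [← star_inner y, inner_op_smul_right, star_mul, star_inner]

theorem isSelfAdjoint_inner_self (x : E) : IsSelfAdjoint (inner (𝕜 := A) x x) :=
  star_inner x x

theorem inner_self_op_smul (x : E) (b : A) :
    inner (𝕜 := A) (x <• b) (x <• b) = star b * inner (𝕜 := A) x x * b := by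
  rw [inner_op_smul_left, inner_op_smul_right, mul_assoc]

theorem inner_self_sub_op_smul (x : E) {b : A} (hb : IsSelfAdjoint b) :
    inner (𝕜 := A) (x - x <• b) (x - x <• b) =
      (inner (𝕜 := A) x x - inner (𝕜 := A) x x * b) -
        b * (inner (𝕜 := A) x x - inner (𝕜 := A) x x * b) := by
  rw [inner_sub_left, inner_sub_right, inner_sub_right, inner_op_smul_left, inner_op_smul_left,
    inner_op_smul_right, hb.star_eq, mul_sub]

end RightCStarModule

theorem sub_mul_self_mul_self_eq_conj {R : Type*} [NonUnitalRing R] {a s : R}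
    (hs : s * s = a) :
    (a - a * a) * (a - a * a) = s * ((a - a * a) - a * (a - a * a)) * s := by
  subst hs
  noncomm_ring

theorem IsSelfAdjoint.eq_zero_of_mul_self_eq_zero {R : Type*} [NonUnitalNormedRing R] [StarRing R]
    [CStarRing R] {b : R} (hb : IsSelfAdjoint b) (h : b * b = 0) : b = 0 := by
  rwa [← CStarRing.star_mul_self_eq_zero_iff, hb.star_eq]

/-- If `(η − η⟨η,η⟩)⟨η,η⟩^{1/2} = 0`, then `⟨η,η⟩` is a projection in `A`. -/
theorem inner_self_isProjection (η : E)
    (h : (η - η <• (inner (𝕜 := A) η η)) <• CFC.sqrt (inner (𝕜 := A) η η) = 0) :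
    IsIdempotentElem (inner (𝕜 := A) η η) ∧ IsSelfAdjoint (inner (𝕜 := A) η η) := by
  set a := inner (𝕜 := A) η η
  have ha : IsSelfAdjoint a := RightCStarModule.isSelfAdjoint_inner_self η
  have hs : CFC.sqrt a * CFC.sqrt a = a :=
    CFC.sqrt_mul_sqrt_self a RightCStarModule.inner_self_nonneg
  have hξ := (RightCStarModule.inner_self (A := A)).mpr h
  rw [RightCStarModule.inner_self_op_smul, RightCStarModule.inner_self_sub_op_smul η ha,
    (IsSelfAdjoint.of_nonneg (CFC.sqrt_nonneg a)).star_eq,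
    ← sub_mul_self_mul_self_eq_conj hs] at hξ
  have haa : IsSelfAdjoint (a * a) := by simpa only [ha.star_eq] using IsSelfAdjoint.star_mul_self a
  have hdefect : a - a * a = 0 := (ha.sub haa).eq_zero_of_mul_self_eq_zero hξ
  exact ⟨(sub_eq_zero.mp hdefect).symm, ha⟩
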